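/- arXiv:math/0304029 — 2 statements merged into one kernel-verified Lean document; each statement's English description precedes it below -/
import Mathlib

section
/- The set of badly approximable real numbers, i.e., {θ ∈ ℝ : ∃ c > 0 such that |θ - p/q| ≥ c/q² for all integers p and all positive integers q}, has full Hausdorff dimension in every nonempty open interval of ℝ (it is thick in ℝ). -/
open MeasureTheory Set
open scoped ENNReal NNReal

namespace BadApprox

noncomputable section
open scoped Classical

/-- base: `R = 2^(k+1)`; level-`n` denominators are in `[R^n, R^(n+1))`. -/
def R (k : ℕ) : ℕ := 2 ^ (k + 1)

/-- number of children kept at each step -/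
def m (k : ℕ) : ℕ := 2 ^ (2 * k + 1) - 2

/-- length of level-`n` intervals -/
def L (k n : ℕ) : ℝ := 1 / (R k : ℝ) ^ (2 * n + 2)

/-- the badly-approximable constant -/
def c (k : ℕ) : ℝ := 1 / (2 * (R k : ℝ) ^ 4)

lemma R_cast_pos (k : ℕ) : (0:ℝ) < (R k : ℝ) := by
  have : 0 < R k := Nat.pow_pos (by norm_num)
  exact_mod_cast this

lemma R_pos (k : ℕ) : 0 < R k := Nat.pow_pos (by norm_num)

lemma one_lt_R (k : ℕ) : 1 < R k := Nat.one_lt_two_pow (by omega)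

lemma L_pos (k n : ℕ) : 0 < L k n := by
  unfold L
  have := R_cast_pos k
  positivity

lemma c_pos (k : ℕ) : 0 < c k := by
  unfold c
  have := R_cast_pos k
  positivity

lemma L_succ (k n : ℕ) : L k n = (R k : ℝ) ^ 2 * L k (n + 1) := by
  unfold L
  have h := R_cast_pos k
  field_simp
  ring

lemma c_div_le (k n : ℕ) {q : ℕ} (hq : R k ^ n ≤ q) :
    c k / (q:ℝ) ^ 2 ≤ L k (n + 1) / 2 := by
  have hRn : (0:ℝ) < (R k : ℝ) ^ n := pow_pos (R_cast_pos k) n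
  have hq' : ((R k : ℝ) ^ n) ≤ (q : ℝ) := by exact_mod_cast hq
  have hqpos : (0:ℝ) < (q:ℝ) := lt_of_lt_of_le hRn hq'
  have h1 : c k / (q:ℝ)^2 ≤ c k / ((R k:ℝ)^n)^2 := by
    apply div_le_div_of_nonneg_left (le_of_lt (c_pos k)) (by positivity)
    exact pow_le_pow_left₀ (le_of_lt hRn) hq' 2
  refine h1.trans (le_of_eq ?_)
  unfold c L
  have h := R_cast_pos k
  have h' : (R k:ℝ) ≠ 0 := ne_of_gt h
  have hx : (R k:ℝ) ^ (2*(n+1)+2) = (R k:ℝ)^4 * ((R k:ℝ)^n)^2 := by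
    rw [← pow_mul, ← pow_add]
    ring_nf
  rw [hx]
  ring

/-- child `i` of the interval `[u, u+L n]` is good at level `n` if it avoids
the `c/q²`-neighbourhoods of all rationals of level `n`. -/
def good (k : ℕ) (u : ℝ) (n i : ℕ) : Prop :=
  ∀ p : ℤ, ∀ q : ℕ, R k ^ n ≤ q → q < R k ^ (n + 1) →
    ((p : ℝ) / q ≤ u + i * L k (n + 1) - c k / (q:ℝ) ^ 2 ∨
      u + (i + 1) * L k (n + 1) + c k / (q:ℝ) ^ 2 ≤ (p : ℝ) / q)

/-- the good even children -/
def G (k : ℕ) (u : ℝ) (n : ℕ) : Finset ℕ :=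
  (Finset.range (2 ^ (2 * k + 1))).filter fun j => good k u n (2 * j)

/-- distinct level-`n` rationals are more than `L k n` apart -/
lemma rat_gap (k n : ℕ) {p p' : ℤ} {q q' : ℕ}
    (hq1 : R k ^ n ≤ q) (hq2 : q < R k ^ (n+1)) (hq1' : R k ^ n ≤ q') (hq2' : q' < R k ^ (n+1))
    (hne : (p:ℝ)/q ≠ (p':ℝ)/q') : L k n < |(p:ℝ)/q - (p':ℝ)/q'| := by
  have hq0 : 0 < q := lt_of_lt_of_le (Nat.pow_pos (R_pos k)) hq1
  have hq0' : 0 < q' := lt_of_lt_of_le (Nat.pow_pos (R_pos k)) hq1'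
  have hqr : (0:ℝ) < q := by exact_mod_cast hq0
  have hqr' : (0:ℝ) < q' := by exact_mod_cast hq0'
  have hcross : p * (q':ℤ) ≠ p' * (q:ℤ) := by
    intro hEq
    apply hne
    rw [div_eq_div_iff (ne_of_gt hqr) (ne_of_gt hqr')]
    exact_mod_cast hEq
  have h1 : (1:ℝ) ≤ |((p * (q':ℤ) - p' * q : ℤ) : ℝ)| := by
    have : p * (q':ℤ) - p' * q ≠ 0 := sub_ne_zero.mpr hcross
    exact_mod_cast Int.one_le_abs this
  have h2 : |(p:ℝ)/q - (p':ℝ)/q'| = |((p * (q':ℤ) - p' * q : ℤ) : ℝ)| / ((q:ℝ) * q') := by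
    have hd : (p:ℝ)/q - (p':ℝ)/q' = ((p * (q':ℤ) - p' * q : ℤ) : ℝ) / ((q:ℝ) * q') := by
      push_cast
      field_simp
    rw [hd, abs_div, abs_of_pos (show (0:ℝ) < (q:ℝ) * q' by positivity)]
  have hR1 : (1:ℝ) ≤ (R k:ℝ) := by exact_mod_cast (one_lt_R k).le
  have hqq : (q:ℝ) * q' < (R k:ℝ) ^ (2*n+2) := by
    have e1 : (q:ℝ) < (R k:ℝ)^(n+1) := by exact_mod_cast hq2
    have e1' : (q':ℝ) < (R k:ℝ)^(n+1) := by exact_mod_cast hq2'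
    calc (q:ℝ) * q' < (R k:ℝ)^(n+1) * (R k:ℝ)^(n+1) :=
          mul_lt_mul' e1.le e1' (le_of_lt hqr') (by positivity)
      _ = (R k:ℝ) ^ (2*n+2) := by rw [← pow_add]; ring_nf
  have h3 : L k n < 1 / ((q:ℝ) * q') := by
    unfold L
    apply one_div_lt_one_div_of_lt (by positivity) hqq
  refine h3.trans_le ?_
  rw [h2]
  apply div_le_div_of_nonneg_right ?_ (by positivity)
  · exact h1


lemma not_good_witness {k : ℕ} {u : ℝ} {n i : ℕ} (h : ¬ good k u n i) :
    ∃ p : ℤ, ∃ q : ℕ, R k ^ n ≤ q ∧ q < R k ^ (n+1) ∧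
      u + i * L k (n + 1) - c k / (q:ℝ) ^ 2 < (p : ℝ) / q ∧
      (p : ℝ) / q < u + (i + 1) * L k (n + 1) + c k / (q:ℝ) ^ 2 := by
  unfold good at h
  push_neg at h
  obtain ⟨p, q, h1, h2, h3, h4⟩ := h
  exact ⟨p, q, h1, h2, h3, h4⟩

lemma witness_lt {k : ℕ} {u : ℝ} {n : ℕ} {j j' : ℕ} (hjj : j < j')
    {p p' : ℤ} {q q' : ℕ} (hq1 : R k ^ n ≤ q) (hq1' : R k ^ n ≤ q')
    (hw : (p : ℝ) / q < u + ((2*j : ℕ) + 1 : ℝ) * L k (n + 1) + c k / (q:ℝ) ^ 2)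
    (hw' : u + ((2*j' : ℕ) : ℝ) * L k (n + 1) - c k / (q':ℝ) ^ 2 < (p' : ℝ) / q') :
    (p : ℝ) / q < (p' : ℝ) / q' := by
  have hc := c_div_le k n hq1
  have hc' := c_div_le k n hq1'
  have hL := L_pos k (n + 1)
  have hmul : (2*(j:ℝ) + 2) * L k (n+1) ≤ (2*(j':ℝ)) * L k (n+1) := by
    apply mul_le_mul_of_nonneg_right ?_ hL.le
    have : (j:ℝ) + 1 ≤ (j':ℝ) := by exact_mod_cast hjj
    linarith
  push_cast at hw hw'
  nlinarith

lemma card_bad_le (k : ℕ) (u : ℝ) (n : ℕ) :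
    ((Finset.range (2 ^ (2*k+1))).filter fun j => ¬ good k u n (2*j)).card ≤ 2 := by
  set s := (Finset.range (2 ^ (2*k+1))).filter (fun j => ¬ good k u n (2*j)) with hs
  by_contra hcard
  push_neg at hcard
  have h3 : 3 ≤ s.card := hcard
  let f : Fin 3 ↪o ℕ := s.orderEmbOfCardLe h3
  have hmem : ∀ i : Fin 3, f i ∈ s := fun i => s.orderEmbOfCardLe_mem h3 i
  have h01 : f 0 < f 1 := f.strictMono (by decide)
  have h12 : f 1 < f 2 := f.strictMono (by decide)
  have hub : ∀ i : Fin 3, f i < 2 ^ (2*k+1) := fun i =>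
    Finset.mem_range.mp (Finset.mem_filter.mp (hmem i)).1
  have hbad : ∀ i : Fin 3, ¬ good k u n (2 * f i) := fun i =>
    (Finset.mem_filter.mp (hmem i)).2
  obtain ⟨p0, q0, ha0, hb0, hw0l, hw0r⟩ := not_good_witness (hbad 0)
  obtain ⟨p1, q1, ha1, hb1, hw1l, hw1r⟩ := not_good_witness (hbad 1)
  obtain ⟨p2, q2, ha2, hb2, hw2l, hw2r⟩ := not_good_witness (hbad 2)
  -- order of witnesses
  have hlt01 : (p0:ℝ)/q0 < (p1:ℝ)/q1 := by
    refine witness_lt (u := u) h01 ha0 ha1 ?_ ?_ <;> push_cast at hw0r hw1l ⊢ <;> linarith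
  have hlt12 : (p1:ℝ)/q1 < (p2:ℝ)/q2 := by
    refine witness_lt (u := u) h12 ha1 ha2 ?_ ?_ <;> push_cast at hw1r hw2l ⊢ <;> linarith
  -- gaps
  have hg01 : L k n < (p1:ℝ)/q1 - (p0:ℝ)/q0 := by
    have := rat_gap k n ha1 hb1 ha0 hb0 (by intro hEq; exact absurd hEq.symm (ne_of_lt hlt01))
    rwa [abs_of_pos (by linarith)] at this
  have hg12 : L k n < (p2:ℝ)/q2 - (p1:ℝ)/q1 := by
    have := rat_gap k n ha2 hb2 ha1 hb1 (by intro hEq; exact absurd hEq.symm (ne_of_lt hlt12))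
    rwa [abs_of_pos (by linarith)] at this
  -- location
  have hc0 := c_div_le k n ha0
  have hc2 := c_div_le k n ha2
  have hL := L_pos k (n+1)
  have hLn : L k n = ((2:ℝ) ^ (2*k+2)) * L k (n+1) := by
    rw [L_succ k n]
    congr 1
    have : ((R k : ℕ) : ℝ) = (2:ℝ) ^ (k+1) := by unfold R; push_cast; ring
    rw [this, ← pow_mul]
    ring_nf
  -- upper bound on (2 * f 2 + 1) + 1 coefficient
  have hcoef : (2 * ((f 2 : ℕ):ℝ) + 2) * L k (n+1) ≤ ((2:ℝ) ^ (2*k+2)) * L k (n+1) := by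
    apply mul_le_mul_of_nonneg_right ?_ hL.le
    have h1 : (f 2 : ℕ) + 1 ≤ 2 ^ (2*k+1) := hub 2
    have h2 : ((f 2 : ℕ):ℝ) + 1 ≤ (2:ℝ) ^ (2*k+1) := by exact_mod_cast h1
    have h3 : (2:ℝ) ^ (2*k+2) = 2 * (2:ℝ) ^ (2*k+1) := by ring
    linarith
  have hf0 : (0:ℝ) ≤ 2 * ((f 0 : ℕ):ℝ) := by positivity
  push_cast at hw2r hw0l
  nlinarith [hf0, hL]

lemma L_succ2 (k n : ℕ) : L k n = ((2:ℝ) ^ (2*k+2)) * L k (n+1) := by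
  rw [L_succ k n]
  congr 1
  have : ((R k : ℕ) : ℝ) = (2:ℝ) ^ (k+1) := by unfold R; push_cast; ring
  rw [this, ← pow_mul]
  ring_nf

lemma m_le_card_G (k : ℕ) (u : ℝ) (n : ℕ) : m k ≤ (G k u n).card := by
  have h := Finset.card_filter_add_card_filter_not
    (s := Finset.range (2 ^ (2*k+1))) (p := fun j => good k u n (2*j))
  rw [Finset.card_range] at h
  have hb := card_bad_le k u n
  unfold G m
  omega

/-- choice of the `i`-th good even child -/
def pick (k : ℕ) (u : ℝ) (n : ℕ) : Fin (m k) ↪o ℕ :=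
  (G k u n).orderEmbOfCardLe (m_le_card_G k u n)

lemma pick_mem (k : ℕ) (u : ℝ) (n : ℕ) (i : Fin (m k)) : pick k u n i ∈ G k u n :=
  Finset.orderEmbOfCardLe_mem _ _ i

lemma pick_good (k : ℕ) (u : ℝ) (n : ℕ) (i : Fin (m k)) : good k u n (2 * pick k u n i) :=
  (Finset.mem_filter.mp (pick_mem k u n i)).2

lemma pick_lt (k : ℕ) (u : ℝ) (n : ℕ) (i : Fin (m k)) : pick k u n i < 2 ^ (2*k+1) :=
  Finset.mem_range.mp (Finset.mem_filter.mp (pick_mem k u n i)).1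

/-- left endpoints of the nested intervals -/
def U (k : ℕ) (u₀ : ℝ) (σ : ℕ → Fin (m k)) : ℕ → ℝ
  | 0 => u₀
  | n+1 => U k u₀ σ n + ((2 * pick k (U k u₀ σ n) n (σ n) : ℕ) : ℝ) * L k (n+1)

lemma U_le_succ (k : ℕ) (u₀ : ℝ) (σ : ℕ → Fin (m k)) (n : ℕ) :
    U k u₀ σ n ≤ U k u₀ σ (n+1) := by
  have hL := L_pos k (n+1)
  have : (0:ℝ) ≤ ((2 * pick k (U k u₀ σ n) n (σ n) : ℕ) : ℝ) * L k (n+1) := by positivity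
  simp only [U]
  linarith

lemma U_succ_add_le (k : ℕ) (u₀ : ℝ) (σ : ℕ → Fin (m k)) (n : ℕ) :
    U k u₀ σ (n+1) + L k (n+1) ≤ U k u₀ σ n + L k n := by
  have hlt := pick_lt k (U k u₀ σ n) n (σ n)
  have hcast : ((2 * pick k (U k u₀ σ n) n (σ n) : ℕ) : ℝ) + 1 ≤ (2:ℝ) ^ (2*k+2) := by
    have h1 : (2 * pick k (U k u₀ σ n) n (σ n) : ℕ) + 1 ≤ 2 ^ (2*k+2) := by
      have : 2 ^ (2*k+2) = 2 * 2 ^ (2*k+1) := by ring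
      omega
    exact_mod_cast h1
  have hL := L_pos k (n+1)
  have hLn := L_succ2 k n
  simp only [U]
  nlinarith

lemma U_mono (k : ℕ) (u₀ : ℝ) (σ : ℕ → Fin (m k)) : Monotone (U k u₀ σ) :=
  monotone_nat_of_le_succ (U_le_succ k u₀ σ)

lemma U_add_L_le (k : ℕ) (u₀ : ℝ) (σ : ℕ → Fin (m k)) {n n' : ℕ} (h : n ≤ n') :
    U k u₀ σ n' + L k n' ≤ U k u₀ σ n + L k n := by
  induction n', h using Nat.le_induction with
  | base => exact le_refl _
  | succ n' hn ih => exact (U_succ_add_le k u₀ σ n').trans ih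

lemma U_le_bound (k : ℕ) (u₀ : ℝ) (σ : ℕ → Fin (m k)) (n : ℕ) :
    U k u₀ σ n ≤ u₀ + L k 0 := by
  have h1 := U_add_L_le k u₀ σ (Nat.zero_le n)
  have := L_pos k n
  simp only [U] at h1
  linarith

/-- the limit point -/
def x (k : ℕ) (u₀ : ℝ) (σ : ℕ → Fin (m k)) : ℝ := ⨆ n, U k u₀ σ n

lemma bddAbove_U (k : ℕ) (u₀ : ℝ) (σ : ℕ → Fin (m k)) :
    BddAbove (Set.range (U k u₀ σ)) := by
  refine ⟨u₀ + L k 0, ?_⟩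
  rintro y ⟨n, rfl⟩
  exact U_le_bound k u₀ σ n

lemma le_x (k : ℕ) (u₀ : ℝ) (σ : ℕ → Fin (m k)) (n : ℕ) :
    U k u₀ σ n ≤ x k u₀ σ :=
  le_ciSup (bddAbove_U k u₀ σ) n

lemma x_le (k : ℕ) (u₀ : ℝ) (σ : ℕ → Fin (m k)) (n : ℕ) :
    x k u₀ σ ≤ U k u₀ σ n + L k n := by
  refine ciSup_le fun j => ?_
  rcases le_total j n with h | h
  · have := U_mono k u₀ σ h
    have := L_pos k n
    linarith
  · have h1 := U_add_L_le k u₀ σ h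
    have := L_pos k j
    linarith

lemma x_avoid (k : ℕ) (u₀ : ℝ) (σ : ℕ → Fin (m k)) (n : ℕ) (p : ℤ) (q : ℕ)
    (h1 : R k ^ n ≤ q) (h2 : q < R k ^ (n+1)) :
    c k / (q:ℝ)^2 ≤ |x k u₀ σ - (p:ℝ)/q| := by
  have hg := pick_good k (U k u₀ σ n) n (σ n) p q h1 h2
  have hlo : U k u₀ σ (n+1) ≤ x k u₀ σ := le_x k u₀ σ (n+1)
  have hhi : x k u₀ σ ≤ U k u₀ σ (n+1) + L k (n+1) := x_le k u₀ σ (n+1)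
  simp only [U] at hlo hhi
  have hRn : (0:ℝ) < ((R k : ℕ) : ℝ) ^ n := pow_pos (R_cast_pos k) n
  have hq0 : (0:ℝ) < (q:ℝ) := by
    have : (((R k) ^ n : ℕ) : ℝ) ≤ (q:ℝ) := by exact_mod_cast h1
    push_cast at this
    linarith
  have hc : 0 < c k / (q:ℝ)^2 := by
    have := c_pos k
    positivity
  rcases hg with h | h
  · rw [abs_of_nonneg (by linarith)]
    linarith
  · rw [abs_of_nonpos (by linarith)]
    linarith

lemma x_mem_ba (k : ℕ) (u₀ : ℝ) (σ : ℕ → Fin (m k)) (p : ℤ) (q : ℕ) (hq : 0 < q) :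
    c k / (q:ℝ)^2 ≤ |x k u₀ σ - (p:ℝ)/q| := by
  have h1 : R k ^ Nat.log (R k) q ≤ q := Nat.pow_log_le_self (R k) hq.ne'
  have h2 : q < R k ^ (Nat.log (R k) q + 1) := Nat.lt_pow_succ_log_self (one_lt_R k) q
  exact x_avoid k u₀ σ (Nat.log (R k) q) p q h1 h2

lemma U_congr (k : ℕ) (u₀ : ℝ) {σ τ : ℕ → Fin (m k)} :
    ∀ n, (∀ i, i < n → σ i = τ i) → U k u₀ σ n = U k u₀ τ n := by
  intro n
  induction n with
  | zero => intro _; rfl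
  | succ n ih =>
      intro h
      have hU := ih fun i hi => h i (by omega)
      simp only [U]
      rw [hU, h n (by omega)]

lemma sep' (k : ℕ) (u₀ : ℝ) {σ τ : ℕ → Fin (m k)} {n : ℕ}
    (hpre : ∀ i, i < n → σ i = τ i) (hlt : σ n < τ n) :
    x k u₀ σ + L k (n+1) ≤ x k u₀ τ := by
  have hU : U k u₀ σ n = U k u₀ τ n := U_congr k u₀ n hpre
  have hp : pick k (U k u₀ σ n) n (σ n) < pick k (U k u₀ σ n) n (τ n) :=
    (pick k (U k u₀ σ n) n).strictMono hlt
  have hle : x k u₀ σ ≤ U k u₀ σ (n+1) + L k (n+1) := x_le k u₀ σ (n+1)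
  have hge : U k u₀ τ (n+1) ≤ x k u₀ τ := le_x k u₀ τ (n+1)
  simp only [U] at hle hge
  rw [← hU] at hge
  have hcast : ((2 * pick k (U k u₀ σ n) n (σ n) : ℕ) : ℝ) + 2 ≤
      ((2 * pick k (U k u₀ σ n) n (τ n) : ℕ) : ℝ) := by
    have : 2 * pick k (U k u₀ σ n) n (σ n) + 2 ≤ 2 * pick k (U k u₀ σ n) n (τ n) := by omega
    exact_mod_cast this
  have hL := L_pos k (n+1)
  nlinarith

lemma sep (k : ℕ) (u₀ : ℝ) {σ τ : ℕ → Fin (m k)} {n : ℕ}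
    (hpre : ∀ i, i < n → σ i = τ i) (hne : σ n ≠ τ n) :
    L k (n+1) ≤ |x k u₀ σ - x k u₀ τ| := by
  have hL := L_pos k (n+1)
  rcases lt_or_gt_of_ne hne with h | h
  · have := sep' k u₀ hpre h
    rw [abs_sub_comm, abs_of_nonneg (by linarith)]
    linarith
  · have := sep' k u₀ (fun i hi => (hpre i hi).symm) h
    rw [abs_of_nonneg (by linarith)]
    linarith

lemma x_inj (k : ℕ) (u₀ : ℝ) : Function.Injective (x k u₀) := by
  intro σ τ hEq
  by_contra hne
  have hex : ∃ n, σ n ≠ τ n := Function.ne_iff.mp hne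
  classical
  set n := Nat.find hex with hn
  have h1 : σ n ≠ τ n := Nat.find_spec hex
  have h2 : ∀ i, i < n → σ i = τ i := fun i hi => by
    by_contra hne'
    exact absurd hi (not_lt.mpr (hn ▸ Nat.find_le hne'))
  have := sep k u₀ h2 h1
  rw [hEq, sub_self, abs_zero] at this
  exact absurd this (not_le.mpr (L_pos k (n+1)))

lemma m_pos {k : ℕ} (hk : 1 ≤ k) : 0 < m k := by
  unfold m
  have : 2 ^ 3 ≤ 2 ^ (2*k+1) := Nat.pow_le_pow_right (by norm_num) (by omega)
  omega

lemma two_le_m_real {k : ℕ} (hk : 1 ≤ k) : (2:ℝ) ≤ (m k : ℝ) := by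
  have : 2 ≤ m k := by
    unfold m
    have : 2 ^ 3 ≤ 2 ^ (2*k+1) := Nat.pow_le_pow_right (by norm_num) (by omega)
    omega
  exact_mod_cast this

lemma m_ge {k : ℕ} (hk : 1 ≤ k) : 2 ^ (2*k) ≤ m k := by
  unfold m
  have h1 : 2 ^ (2*k+1) = 2 * 2 ^ (2*k) := by ring
  have h2 : 2 ≤ 2 ^ (2*k) := by
    calc 2 = 2^1 := by norm_num
    _ ≤ 2 ^ (2*k) := Nat.pow_le_pow_right (by norm_num) (by omega)
  omega

/-- digit encoding map onto `[0,1]` -/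
def enc (k : ℕ) (σ : ℕ → Fin (m k)) : ℝ := ∑' n, ((σ n : ℕ) : ℝ) * (1 / (m k : ℝ)) ^ (n+1)

section Enc

variable {k : ℕ}

lemma inv_m_lt_one (hk : 1 ≤ k) : 1 / (m k : ℝ) < 1 := by
  have := two_le_m_real hk
  rw [div_lt_one (by linarith)]
  linarith

lemma inv_m_nonneg (hk : 1 ≤ k) : 0 ≤ 1 / (m k : ℝ) := by
  have := two_le_m_real hk
  positivity

lemma term_le (hk : 1 ≤ k) (σ : ℕ → Fin (m k)) (n : ℕ) :
    ((σ n : ℕ) : ℝ) * (1 / (m k : ℝ)) ^ (n+1) ≤ (1 / (m k : ℝ)) ^ n := by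
  have hm : (0:ℝ) < (m k : ℝ) := lt_of_lt_of_le two_pos (two_le_m_real hk)
  have h1 : ((σ n : ℕ) : ℝ) ≤ (m k : ℝ) := by
    exact_mod_cast (σ n).2.le
  calc ((σ n : ℕ) : ℝ) * (1 / (m k : ℝ)) ^ (n+1) ≤ (m k : ℝ) * (1 / (m k : ℝ)) ^ (n+1) := by
        apply mul_le_mul_of_nonneg_right h1 (by positivity)
    _ = (1 / (m k : ℝ)) ^ n := by
        rw [pow_succ]
        field_simp

lemma summable_enc (hk : 1 ≤ k) (σ : ℕ → Fin (m k)) :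
    Summable (fun n => ((σ n : ℕ) : ℝ) * (1 / (m k : ℝ)) ^ (n+1)) := by
  apply Summable.of_nonneg_of_le (fun n => by positivity) (term_le hk σ)
  exact summable_geometric_of_lt_one (inv_m_nonneg hk) (inv_m_lt_one hk)

lemma enc_tendsto (hk : 1 ≤ k) (σ : ℕ → Fin (m k)) :
    Filter.Tendsto (fun j => ∑ n ∈ Finset.range j, ((σ n : ℕ) : ℝ) * (1 / (m k : ℝ)) ^ (n+1))
      Filter.atTop (nhds (enc k σ)) :=
  (summable_enc hk σ).hasSum.tendsto_sum_nat

/-- the tail geometric series -/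
lemma hasSum_tail (hk : 1 ≤ k) (n : ℕ) :
    HasSum (fun i => if i < n then (0:ℝ) else ((m k : ℝ) - 1) * (1 / (m k : ℝ)) ^ (i+1))
      ((1 / (m k : ℝ)) ^ n) := by
  have hm : (2:ℝ) ≤ (m k : ℝ) := two_le_m_real hk
  have hm0 : (0:ℝ) < (m k : ℝ) := by linarith
  have hgeo : HasSum (fun i => (1 / (m k : ℝ)) ^ i) (1 - 1 / (m k : ℝ))⁻¹ :=
    hasSum_geometric_of_lt_one (inv_m_nonneg hk) (inv_m_lt_one hk)
  have hshift := (hgeo.mul_left (((m k : ℝ) - 1) * (1 / (m k : ℝ)) ^ (n+1)))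
  have hinj : Function.Injective (fun i : ℕ => i + n) := fun a b h => by
    simpa using h
  have hvanish : ∀ x ∉ Set.range (fun i : ℕ => i + n),
      (if x < n then (0:ℝ) else ((m k : ℝ) - 1) * (1 / (m k : ℝ)) ^ (x+1)) = 0 := by
    intro x hx
    have hlt : x < n := by
      by_contra hge
      exact hx ⟨x - n, show x - n + n = x by omega⟩
    rw [if_pos hlt]
  have heq : ((m k : ℝ) - 1) * (1 / (m k : ℝ)) ^ (n+1) * (1 - 1/(m k : ℝ))⁻¹
      = (1 / (m k : ℝ)) ^ n := by
    have hne : (m k : ℝ) ≠ 0 := by linarith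
    have hne1 : (m k : ℝ) - 1 ≠ 0 := by intro h; nlinarith
    have h1 : (1 - 1/(m k : ℝ)) = ((m k : ℝ) - 1)/(m k : ℝ) := by field_simp
    rw [h1, inv_div, pow_succ]
    field_simp
  rw [← heq]
  apply (Function.Injective.hasSum_iff hinj hvanish).mp
  have hfun : ((fun x : ℕ => if x < n then (0:ℝ)
        else ((m k : ℝ) - 1) * (1 / (m k : ℝ)) ^ (x+1)) ∘ fun i : ℕ => i + n)
      = fun i : ℕ => ((m k : ℝ) - 1) * (1 / (m k : ℝ)) ^ (n+1) * (1 / (m k : ℝ)) ^ i := by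
    funext i
    simp only [Function.comp_apply]
    rw [if_neg (by omega)]
    rw [show i + n + 1 = (n + 1) + i by omega, pow_add]
    ring
  rw [hfun]
  exact hshift

lemma enc_dist (hk : 1 ≤ k) {σ τ : ℕ → Fin (m k)} {n : ℕ} (hpre : ∀ i, i < n → σ i = τ i) :
    |enc k σ - enc k τ| ≤ (1 / (m k : ℝ)) ^ n := by
  have hm : (2:ℝ) ≤ (m k : ℝ) := two_le_m_real hk
  set g : ℕ → ℝ := fun i => if i < n then (0:ℝ) else ((m k : ℝ) - 1) * (1 / (m k : ℝ)) ^ (i+1)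
    with hg
  have hgsum := hasSum_tail hk n
  have hbound : ∀ j, |(∑ i ∈ Finset.range j, ((σ i : ℕ) : ℝ) * (1 / (m k : ℝ)) ^ (i+1)) -
      (∑ i ∈ Finset.range j, ((τ i : ℕ) : ℝ) * (1 / (m k : ℝ)) ^ (i+1))| ≤ (1 / (m k : ℝ)) ^ n := by
    intro j
    rw [← Finset.sum_sub_distrib]
    refine (Finset.abs_sum_le_sum_abs _ _).trans ?_
    have h1 : ∀ i ∈ Finset.range j,
        |((σ i : ℕ) : ℝ) * (1 / (m k : ℝ)) ^ (i+1) - ((τ i : ℕ) : ℝ) * (1 / (m k : ℝ)) ^ (i+1)|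
          ≤ g i := by
      intro i _
      rw [← sub_mul, abs_mul, abs_of_nonneg (by positivity : (0:ℝ) ≤ (1 / (m k : ℝ)) ^ (i+1))]
      rcases lt_or_ge i n with hi | hi
      · rw [hpre i hi, sub_self, abs_zero, zero_mul, hg]
        simp [hi]
      · rw [hg]
        simp only [if_neg (not_lt.mpr hi)]
        apply mul_le_mul_of_nonneg_right ?_ (by positivity)
        have h2 : ((σ i : ℕ) : ℝ) ≤ (m k : ℝ) - 1 := by
          have := (σ i).2
          have : (σ i : ℕ) + 1 ≤ m k := this
          have : ((σ i : ℕ) : ℝ) + 1 ≤ (m k : ℝ) := by exact_mod_cast this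
          linarith
        have h3 : ((τ i : ℕ) : ℝ) ≤ (m k : ℝ) - 1 := by
          have := (τ i).2
          have : (τ i : ℕ) + 1 ≤ m k := this
          have : ((τ i : ℕ) : ℝ) + 1 ≤ (m k : ℝ) := by exact_mod_cast this
          linarith
        have hσ0 : (0:ℝ) ≤ ((σ i : ℕ) : ℝ) := Nat.cast_nonneg _
        have hτ0 : (0:ℝ) ≤ ((τ i : ℕ) : ℝ) := Nat.cast_nonneg _
        rw [abs_sub_le_iff]
        constructor <;> linarith
    refine (Finset.sum_le_sum h1).trans ?_
    refine (hgsum.summable.sum_le_tsum (Finset.range j) (fun i _ => ?_)).trans_eq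
      hgsum.tsum_eq
    have hm1 : (0:ℝ) ≤ (m k : ℝ) - 1 := by linarith
    split
    · exact le_refl 0
    · positivity
  have htend := ((enc_tendsto hk σ).sub (enc_tendsto hk τ)).abs
  exact le_of_tendsto' htend hbound

lemma floor_partial (hk : 1 ≤ k) {t : ℝ} (h0 : 0 ≤ t) (h1 : t < 1) (j : ℕ) :
    (∑ n ∈ Finset.range j,
        ((Nat.floor (t * (m k : ℝ) ^ (n+1)) % m k : ℕ) : ℝ) * (1 / (m k : ℝ)) ^ (n+1))
      = (Nat.floor (t * (m k : ℝ) ^ j) : ℝ) / (m k : ℝ) ^ j := by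
  have hm : (2:ℝ) ≤ (m k : ℝ) := two_le_m_real hk
  have hm0 : (0:ℝ) < (m k : ℝ) := by linarith
  induction j with
  | zero =>
      simp only [Finset.range_zero, Finset.sum_empty, pow_zero, mul_one, div_one]
      rw [Nat.floor_eq_zero.mpr h1]
      simp
  | succ j ih =>
      rw [Finset.sum_range_succ, ih]
      set A := Nat.floor (t * (m k : ℝ) ^ (j+1)) with hA
      set B := Nat.floor (t * (m k : ℝ) ^ j) with hB
      have hdiv : B = A / m k := by
        rw [hB, hA]
        have h2 : t * (m k : ℝ) ^ j = (t * (m k : ℝ) ^ (j+1)) / (m k : ℕ) := by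
          rw [pow_succ]
          field_simp
        rw [h2, Nat.floor_div_natCast]
      have hmod : (m k) * B + A % m k = A := by
        rw [hdiv]
        exact Nat.div_add_mod A (m k)
      have hcast : ((m k : ℝ)) * (B:ℝ) + ((A % m k : ℕ) : ℝ) = (A:ℝ) := by
        exact_mod_cast congrArg (Nat.cast (R := ℝ)) hmod
      rw [div_pow, one_pow, ← hcast, pow_succ]
      field_simp
      try ring

lemma enc_surj (hk : 1 ≤ k) {t : ℝ} (h0 : 0 ≤ t) (h1 : t < 1) :
    ∃ σ : ℕ → Fin (m k), enc k σ = t := by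
  have hm : (2:ℝ) ≤ (m k : ℝ) := two_le_m_real hk
  have hm0 : (0:ℝ) < (m k : ℝ) := by linarith
  refine ⟨fun n => ⟨Nat.floor (t * (m k : ℝ) ^ (n+1)) % m k, Nat.mod_lt _ (m_pos hk)⟩, ?_⟩
  set σ : ℕ → Fin (m k) :=
    fun n => ⟨Nat.floor (t * (m k : ℝ) ^ (n+1)) % m k, Nat.mod_lt _ (m_pos hk)⟩ with hσ
  have hpart : ∀ j, (∑ n ∈ Finset.range j, ((σ n : ℕ) : ℝ) * (1 / (m k : ℝ)) ^ (n+1))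
      = (Nat.floor (t * (m k : ℝ) ^ j) : ℝ) / (m k : ℝ) ^ j := fun j => floor_partial hk h0 h1 j
  have hb : ∀ j, |(Nat.floor (t * (m k : ℝ) ^ j) : ℝ) / (m k : ℝ) ^ j - t| ≤ (1 / (m k : ℝ)) ^ j := by
    intro j
    have hy : (0:ℝ) ≤ t * (m k : ℝ) ^ j := by positivity
    have hfl : (Nat.floor (t * (m k : ℝ) ^ j) : ℝ) ≤ t * (m k : ℝ) ^ j := Nat.floor_le hy
    have hfu : t * (m k : ℝ) ^ j < (Nat.floor (t * (m k : ℝ) ^ j) : ℝ) + 1 :=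
      Nat.lt_floor_add_one _
    have hp : (0:ℝ) < (m k : ℝ) ^ j := by positivity
    have hpw : (1/(m k : ℝ))^j = 1/(m k : ℝ)^j := by rw [div_pow, one_pow]
    have hA : (Nat.floor (t * (m k : ℝ) ^ j) : ℝ) / (m k : ℝ) ^ j ≤ t :=
      (div_le_iff₀ hp).mpr (by linarith)
    have hB : t ≤ ((Nat.floor (t * (m k : ℝ) ^ j) : ℝ) + 1) / (m k : ℝ) ^ j :=
      (le_div_iff₀ hp).mpr (by linarith)
    have hC : ((Nat.floor (t * (m k : ℝ) ^ j) : ℝ) + 1) / (m k : ℝ) ^ j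
        = (Nat.floor (t * (m k : ℝ) ^ j) : ℝ) / (m k : ℝ) ^ j + 1/(m k : ℝ)^j := by
      field_simp
    rw [abs_sub_le_iff]
    constructor
    · have : (0:ℝ) ≤ (1/(m k : ℝ))^j := by positivity
      linarith
    · rw [hpw]
      linarith
  have hzero : Filter.Tendsto (fun j => (1 / (m k : ℝ)) ^ j) Filter.atTop (nhds 0) :=
    tendsto_pow_atTop_nhds_zero_of_lt_one (inv_m_nonneg hk) (inv_m_lt_one hk)
  have ht1 : Filter.Tendsto (fun j => (Nat.floor (t * (m k : ℝ) ^ j) : ℝ) / (m k : ℝ) ^ j)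
      Filter.atTop (nhds t) := by
    rw [← tendsto_sub_nhds_zero_iff]
    exact squeeze_zero_norm hb hzero
  have ht2 := enc_tendsto hk σ
  rw [show (fun j => ∑ n ∈ Finset.range j, ((σ n : ℕ) : ℝ) * (1 / (m k : ℝ)) ^ (n+1))
      = fun j => (Nat.floor (t * (m k : ℝ) ^ j) : ℝ) / (m k : ℝ) ^ j from funext hpart] at ht2
  exact tendsto_nhds_unique ht2 ht1

end Enc

lemma L_rpow {k : ℕ} (hk : 1 ≤ k) (n : ℕ) :
    (1 / (m k : ℝ))^n ≤ (m k : ℝ)^2 * (L k (n+1)) ^ ((k:ℝ)/((k:ℝ)+1)) := by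
  have hm : (2:ℝ) ≤ (m k : ℝ) := two_le_m_real hk
  have hm0 : (0:ℝ) < (m k : ℝ) := by linarith
  have hk1 : (0:ℝ) < (k:ℝ) + 1 := by positivity
  set r : ℝ := (k:ℝ)/((k:ℝ)+1) with hr
  have hr0 : 0 ≤ r := by positivity
  -- L k (n+1) as a power of 2
  have hL2 : L k (n+1) = ((2:ℝ) ^ ((k+1)*(2*n+4) : ℕ))⁻¹ := by
    unfold L R
    rw [one_div]
    congr 1
    push_cast
    rw [← pow_mul]
    congr 1
    try ring
  -- its rpow
  have hLr : (L k (n+1)) ^ r = (((2:ℝ) ^ (2*k : ℕ)) ^ (n+2 : ℕ))⁻¹ := by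
    have h2nn : (0:ℝ) ≤ 2 := by norm_num
    rw [hL2, ← Real.rpow_natCast (2:ℝ) ((k+1)*(2*n+4)), ← Real.rpow_neg h2nn,
      ← Real.rpow_mul h2nn]
    have harg : -(((k+1)*(2*n+4) : ℕ):ℝ) * r = -((((2*k)*(n+2) : ℕ)):ℝ) := by
      rw [hr]
      have hkne : (k:ℝ) + 1 ≠ 0 := ne_of_gt hk1
      push_cast
      field_simp
      ring
    rw [harg, Real.rpow_neg h2nn, Real.rpow_natCast, pow_mul]
  have hmge : ((2:ℝ) ^ (2*k : ℕ)) ≤ (m k : ℝ) := by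
    have := m_ge hk
    exact_mod_cast this
  have hpow : ((m k : ℝ) ^ (n+2 : ℕ))⁻¹ ≤ (((2:ℝ) ^ (2*k : ℕ)) ^ (n+2 : ℕ))⁻¹ := by
    apply inv_anti₀ (by positivity)
    exact pow_le_pow_left₀ (by positivity) hmge (n+2)
  have hfinal : (m k : ℝ)^2 * ((m k : ℝ) ^ (n+2 : ℕ))⁻¹ = (1 / (m k : ℝ))^n := by
    rw [div_pow, one_pow]
    rw [show (n+2 : ℕ) = n + 2 from rfl, pow_add]
    field_simp
  calc (1 / (m k : ℝ))^n = (m k : ℝ)^2 * ((m k : ℝ) ^ (n+2 : ℕ))⁻¹ := hfinal.symm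
    _ ≤ (m k : ℝ)^2 * (((2:ℝ) ^ (2*k : ℕ)) ^ (n+2 : ℕ))⁻¹ := by
        apply mul_le_mul_of_nonneg_left hpow (by positivity)
    _ = (m k : ℝ)^2 * (L k (n+1)) ^ r := by rw [hLr]

lemma key {k : ℕ} (hk : 1 ≤ k) (u₀ : ℝ) (σ τ : ℕ → Fin (m k)) :
    |enc k σ - enc k τ| ≤ (m k : ℝ)^2 * |x k u₀ σ - x k u₀ τ| ^ ((k:ℝ)/((k:ℝ)+1)) := by
  have hm : (2:ℝ) ≤ (m k : ℝ) := two_le_m_real hk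
  rcases eq_or_ne σ τ with rfl | hne
  · rw [sub_self, abs_zero, sub_self, abs_zero]
    positivity
  · classical
    have hex : ∃ n, σ n ≠ τ n := Function.ne_iff.mp hne
    set n := Nat.find hex with hn
    have hd : σ n ≠ τ n := Nat.find_spec hex
    have hpre : ∀ i, i < n → σ i = τ i := fun i hi => by
      by_contra hne'
      exact absurd hi (not_lt.mpr (hn ▸ Nat.find_le hne'))
    have h1 := enc_dist hk hpre
    have h2 := sep k u₀ hpre hd
    have h3 : (L k (n+1)) ^ ((k:ℝ)/((k:ℝ)+1)) ≤
        |x k u₀ σ - x k u₀ τ| ^ ((k:ℝ)/((k:ℝ)+1)) :=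
      Real.rpow_le_rpow (L_pos k (n+1)).le h2 (by positivity)
    calc |enc k σ - enc k τ| ≤ (1 / (m k : ℝ))^n := h1
      _ ≤ (m k : ℝ)^2 * (L k (n+1)) ^ ((k:ℝ)/((k:ℝ)+1)) := L_rpow hk n
      _ ≤ (m k : ℝ)^2 * |x k u₀ σ - x k u₀ τ| ^ ((k:ℝ)/((k:ℝ)+1)) := by
          apply mul_le_mul_of_nonneg_left h3 (by positivity)

theorem dim_ge (k : ℕ) (hk : 1 ≤ k) {a b u₀ : ℝ} (ha : a < u₀) (hb : u₀ + L k 0 < b) :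
    ((k : ℝ≥0∞)/((k:ℝ≥0∞)+1)) ≤ dimH ({θ : ℝ | ∃ c' : ℝ, 0 < c' ∧ ∀ (p : ℤ) (q : ℕ), 0 < q →
        |θ - (p : ℝ) / (q : ℝ)| ≥ c' / (q : ℝ) ^ 2} ∩ Set.Ioo a b) := by
  classical
  haveI : Nonempty (Fin (m k)) := ⟨⟨0, m_pos hk⟩⟩
  set K : Set ℝ := Set.range (x k u₀) with hK
  set g : ℝ → ℝ := fun y => enc k (Function.invFun (x k u₀) y) with hg
  set r : ℝ≥0 := (k : ℝ≥0) / ((k:ℝ≥0)+1) with hr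
  have hkpos : (0:ℝ≥0) < (k : ℝ≥0) := by
    have : (0:ℕ) < k := hk
    exact_mod_cast this
  have hr0 : 0 < r := by
    rw [hr]
    apply div_pos hkpos (by positivity)
  have hrreal : (r : ℝ) = (k:ℝ)/((k:ℝ)+1) := by
    rw [hr, NNReal.coe_div]
    push_cast
    rfl
  have hgx : ∀ σ, g (x k u₀ σ) = enc k σ := by
    intro σ
    rw [hg]
    simp only
    rw [Function.leftInverse_invFun (x_inj k u₀) σ]
  have hHolder : HolderOnWith ((m k : ℝ≥0)^2) r g K := by
    rintro y ⟨σ, rfl⟩ z ⟨τ, rfl⟩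
    rw [edist_dist, edist_dist, Real.dist_eq, Real.dist_eq, hgx, hgx]
    have hkey := key hk u₀ σ τ
    rw [← hrreal] at hkey
    calc ENNReal.ofReal |enc k σ - enc k τ|
        ≤ ENNReal.ofReal ((m k : ℝ)^2 * |x k u₀ σ - x k u₀ τ| ^ (r:ℝ)) :=
          ENNReal.ofReal_le_ofReal hkey
      _ = ENNReal.ofReal ((m k : ℝ)^2) * ENNReal.ofReal (|x k u₀ σ - x k u₀ τ| ^ (r:ℝ)) :=
          ENNReal.ofReal_mul (by positivity)
      _ = ((m k : ℝ≥0)^2 : ℝ≥0∞) * (ENNReal.ofReal |x k u₀ σ - x k u₀ τ|) ^ (r:ℝ) := by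
          rw [← ENNReal.ofReal_rpow_of_nonneg (abs_nonneg _) (by positivity)]
          congr 1
          have hcoe2 : ((m k : ℝ)^2) = (((m k : ℝ≥0)^2 : ℝ≥0) : ℝ) := by push_cast; ring
          rw [hcoe2]
          exact ENNReal.ofReal_coe_nnreal
  have himage : Set.Ico (0:ℝ) 1 ⊆ g '' K := by
    rintro t ⟨ht0, ht1⟩
    obtain ⟨σ, hσ⟩ := enc_surj hk ht0 ht1
    exact ⟨x k u₀ σ, ⟨σ, rfl⟩, by rw [hgx, hσ]⟩
  have h1 : (1:ℝ≥0∞) ≤ dimH (g '' K) := by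
    have hIco : dimH (Set.Ico (0:ℝ) 1) = 1 := by
      have hmem : Set.Ico (0:ℝ) 1 ∈ nhds (1/2 : ℝ) := by
        rw [mem_nhds_iff]
        exact ⟨Set.Ioo 0 1, Set.Ioo_subset_Ico_self, isOpen_Ioo, by norm_num⟩
      rw [Real.dimH_of_mem_nhds hmem, Module.finrank_self, Nat.cast_one]
    rw [← hIco]
    exact dimH_mono himage
  have h2 : dimH (g '' K) ≤ dimH K / r := hHolder.dimH_image_le hr0
  have h3 : (r : ℝ≥0∞) ≤ dimH K := by
    have h4 : (1:ℝ≥0∞) ≤ dimH K / (r : ℝ≥0∞) := le_trans h1 h2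
    rw [ENNReal.le_div_iff_mul_le (Or.inl (by exact_mod_cast hr0.ne')) (Or.inl ENNReal.coe_ne_top)]
      at h4
    simpa using h4
  have hsub : K ⊆ {θ : ℝ | ∃ c' : ℝ, 0 < c' ∧ ∀ (p : ℤ) (q : ℕ), 0 < q →
      |θ - (p : ℝ) / (q : ℝ)| ≥ c' / (q : ℝ) ^ 2} ∩ Set.Ioo a b := by
    rintro y ⟨σ, rfl⟩
    refine ⟨⟨c k, c_pos k, fun p q hq => x_mem_ba k u₀ σ p q hq⟩, ?_, ?_⟩
    · exact lt_of_lt_of_le ha (le_x k u₀ σ 0)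
    · have := x_le k u₀ σ 0
      have hU0 : U k u₀ σ 0 = u₀ := rfl
      rw [hU0] at this
      linarith
  have hcoe : ((k : ℝ≥0∞)/((k:ℝ≥0∞)+1)) = (r : ℝ≥0∞) := by
    rw [hr, ENNReal.coe_div (by positivity)]
    push_cast
    rfl
  rw [hcoe]
  exact le_trans h3 ((dimH_mono hsub))

end

end BadApprox


theorem badlyApproximable_thick :
    ∀ a b : ℝ, a < b →
      dimH ({θ : ℝ | ∃ c : ℝ, 0 < c ∧ ∀ (p : ℤ) (q : ℕ), 0 < q →
          |θ - (p : ℝ) / (q : ℝ)| ≥ c / (q : ℝ) ^ 2} ∩ Set.Ioo a b) = 1 := by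
  intro a b hab
  refine le_antisymm ?_ ?_
  · calc dimH _ ≤ dimH (Set.univ : Set ℝ) := dimH_mono (Set.subset_univ _)
      _ = 1 := Real.dimH_univ
  · refine le_of_forall_lt_imp_le_of_dense fun w hw => ?_
    -- w < 1 in ℝ≥0∞
    lift w to ℝ≥0 using (hw.trans_le le_top).ne with v hv
    have hv1 : (v : ℝ) < 1 := by exact_mod_cast hw
    have hv0 : (0:ℝ) ≤ (v : ℝ) := v.coe_nonneg
    obtain ⟨N, hN⟩ := exists_nat_one_div_lt (by linarith : (0:ℝ) < 1 - v)
    obtain ⟨M, hM⟩ := exists_nat_gt (2 / (b - a))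
    set k : ℕ := max (max N M) 1 with hk
    have hk1 : 1 ≤ k := le_max_right _ _
    have hkN : N ≤ k := le_trans (le_max_left _ _) (le_max_left _ _)
    have hkM : M ≤ k := le_trans (le_max_right _ _) (le_max_left _ _)
    -- v ≤ k/(k+1) over ℝ
    have hstep1 : (v : ℝ) ≤ (N:ℝ)/((N:ℝ)+1) := by
      have h1 : (0:ℝ) < (N:ℝ) + 1 := by positivity
      have h2 : (N:ℝ)/((N:ℝ)+1) = 1 - 1/((N:ℝ)+1) := by field_simp; ring
      linarith
    have hstep2 : (N:ℝ)/((N:ℝ)+1) ≤ (k:ℝ)/((k:ℝ)+1) := by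
      have h1 : (0:ℝ) < (N:ℝ) + 1 := by positivity
      have h2 : (0:ℝ) < (k:ℝ) + 1 := by positivity
      rw [div_le_div_iff₀ h1 h2]
      have : (N:ℝ) ≤ (k:ℝ) := by exact_mod_cast hkN
      nlinarith
    have hvk : (v : ℝ) ≤ (k:ℝ)/((k:ℝ)+1) := hstep1.trans hstep2
    -- interval smallness
    have hLk : BadApprox.L k 0 < (b - a) / 2 := by
      have h1 : (2:ℝ) / (b - a) < (2:ℝ) ^ (2*k+2) := by
        have h2 : (M:ℝ) ≤ (k:ℝ) := by exact_mod_cast hkM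
        have h3 : (k:ℝ) < (2:ℝ)^k := by exact_mod_cast (Nat.lt_two_pow_self : k < 2 ^ k)
        have h4 : (2:ℝ)^k ≤ (2:ℝ)^(2*k+2) :=
          pow_le_pow_right₀ (by norm_num) (by omega)
        linarith
      have hba : (0:ℝ) < b - a := by linarith
      unfold BadApprox.L BadApprox.R
      have h5 : ((2^(k+1) : ℕ) : ℝ) ^ (2*0+2) = (2:ℝ)^(2*k+2) := by
        push_cast
        rw [← pow_mul]
        congr 1
        ring
      rw [h5]
      rw [div_lt_div_iff₀ (by positivity) (by norm_num)]
      rw [div_lt_iff₀ hba] at h1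
      nlinarith
    -- apply the main estimate
    have hmain := BadApprox.dim_ge k hk1 (a := a) (b := b) (u₀ := (a+b)/2)
      (by linarith) (by linarith)
    refine le_trans ?_ hmain
    -- w = v ≤ k/(k+1) in ℝ≥0∞
    have hkk : (v:ℝ≥0∞) * ((k:ℝ≥0∞)+1) ≤ (k:ℝ≥0∞) := by
      rw [show ((k:ℝ≥0∞)+1) = ((k+1 : ℕ) : ℝ≥0∞) by push_cast; ring]
      rw [show ((k:ℝ≥0∞)) = (((k:ℝ≥0)) : ℝ≥0∞) by push_cast; rfl,
        show (((k+1:ℕ):ℝ≥0∞)) = (((k+1:ℕ) : ℝ≥0) : ℝ≥0∞) by push_cast; rfl,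
        ← ENNReal.coe_mul, ENNReal.coe_le_coe, ← NNReal.coe_le_coe]
      push_cast
      have h2 : (0:ℝ) < (k:ℝ) + 1 := by positivity
      rw [le_div_iff₀ h2] at hvk
      linarith
    refine (ENNReal.le_div_iff_mul_le (Or.inl ?_) (Or.inl ?_)).mpr hkk
    · exact ne_of_gt (lt_of_lt_of_le zero_lt_one le_add_self)
    · exact ENNReal.add_ne_top.mpr ⟨ENNReal.natCast_ne_top k, ENNReal.one_ne_top⟩
end

section
/- Let θ be irrational and consider the linear flow b_t(p) = p + t·(sin θ, cos θ) mod ℤ² on the torus ℝ²/ℤ². If θ is badly approximable (there exists c₀ > 0 with |tan θ − p/q| ≥ c₀/q² for all rationals p/q), then there exists c > 0 such that liminf_{t→∞} t · d(p, b_t(p)) ≥ c for every p in the torus, where d is the flat metric on ℝ²/ℤ². -/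
open Real Filter

theorem torus_linear_flow_slow_recurrence (θ : ℝ) (hirr : Irrational θ)
    (hbad : ∃ c₀ : ℝ, 0 < c₀ ∧ ∀ (p : ℤ) (q : ℕ), 0 < q →
      |Real.tan θ - (p : ℝ) / (q : ℝ)| ≥ c₀ / (q : ℝ) ^ 2) :
    ∃ c : ℝ, 0 < c ∧ ∀ p : AddCircle (1 : ℝ) × AddCircle (1 : ℝ),
      c ≤ Filter.liminf (fun t : ℝ =>
        t * dist p (p.1 + ((t * Real.sin θ : ℝ) : AddCircle (1 : ℝ)),
                    p.2 + ((t * Real.cos θ : ℝ) : AddCircle (1 : ℝ)))) Filter.atTop := by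
  obtain ⟨c₀, hc₀, hbad⟩ := hbad
  set α := Real.tan θ with hα
  -- cos θ ≠ 0
  have hcos : Real.cos θ ≠ 0 := by
    intro h
    have h1 := hbad 0 1 one_pos
    have h0 : α = 0 := by
      rw [hα, Real.tan_eq_sin_div_cos, h, div_zero]
    rw [h0] at h1
    simp at h1
    linarith
  have hs : Real.sin θ = α * Real.cos θ := by
    rw [hα, Real.tan_eq_sin_div_cos]
    field_simp
  -- extended bad approximability over ℤ
  have habs : ∀ (x y : ℝ), y ≠ 0 → |α - x / y| * |y| = |α * y - x| := by
    intro x y hy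
    rw [← abs_mul]
    congr 1
    field_simp
  have key : ∀ (p q : ℤ), q ≠ 0 → c₀ / |(q : ℝ)| ≤ |α * q - p| := by
    intro p q hq
    rcases lt_or_gt_of_ne hq with hneg | hpos
    · have hn : (0 : ℕ) < (-q).toNat := by omega
      have h := hbad (-p) (-q).toNat hn
      have hcast : (((-q).toNat : ℕ) : ℝ) = -(q : ℝ) := by
        exact_mod_cast Int.toNat_of_nonneg (by omega : (0:ℤ) ≤ -q)
      rw [hcast] at h
      push_cast at h
      have hqpos : (0:ℝ) < -(q:ℝ) := by exact_mod_cast (by omega : (0:ℤ) < -q)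
      have habs1 := habs (-(p:ℝ)) (-(q:ℝ)) (by linarith)
      have hargs : |α * -(q:ℝ) - -(p:ℝ)| = |α * q - p| := by
        rw [show α * -(q:ℝ) - -(p:ℝ) = -(α * q - p) by ring, abs_neg]
      rw [hargs] at habs1
      have hql : |(q:ℝ)| = -(q:ℝ) := abs_of_neg (by linarith)
      have hqln : |-(q:ℝ)| = -(q:ℝ) := abs_of_pos hqpos
      rw [hqln] at habs1
      rw [← habs1, hql]
      calc c₀ / -(q:ℝ) = c₀ / (-(q:ℝ))^2 * (-(q:ℝ)) := by
            rw [sq]; field_simp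
        _ ≤ |α - -(p:ℝ) / -(q:ℝ)| * -(q:ℝ) := mul_le_mul_of_nonneg_right h hqpos.le
    · have hn : (0 : ℕ) < q.toNat := by omega
      have h := hbad p q.toNat hn
      have hcast : ((q.toNat : ℕ) : ℝ) = (q : ℝ) := by
        exact_mod_cast Int.toNat_of_nonneg (by omega : (0:ℤ) ≤ q)
      rw [hcast] at h
      have hqpos : (0:ℝ) < (q:ℝ) := by exact_mod_cast hpos
      have habs1 := habs (p:ℝ) (q:ℝ) hqpos.ne'
      have hql : |(q:ℝ)| = (q:ℝ) := abs_of_pos hqpos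
      rw [hql] at habs1 ⊢
      rw [← habs1]
      calc c₀ / (q:ℝ) = c₀ / (q:ℝ)^2 * (q:ℝ) := by rw [sq]; field_simp
        _ ≤ |α - (p:ℝ) / (q:ℝ)| * (q:ℝ) := mul_le_mul_of_nonneg_right h hqpos.le
  set co := |Real.cos θ| with hco
  have hcopos : 0 < co := abs_pos.mpr hcos
  set c := c₀ / ((1 + |α|) * (1 + co)) with hc
  have hcpos : 0 < c := by
    apply div_pos hc₀
    positivity
  -- distance formula
  have hnorm : ∀ y : ℝ, ‖((y : ℝ) : AddCircle (1 : ℝ))‖ = |y - round y| := by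
    intro y
    rw [AddCircle.norm_eq]
    norm_num
  have hdist : ∀ (p : AddCircle (1 : ℝ) × AddCircle (1 : ℝ)) (x y : ℝ),
      dist p (p.1 + ((x : ℝ) : AddCircle (1 : ℝ)), p.2 + ((y : ℝ) : AddCircle (1 : ℝ)))
      = max |x - round x| |y - round y| := by
    intro p x y
    rw [Prod.dist_eq]
    have h1 : dist p.1 (p.1 + ((x : ℝ) : AddCircle (1 : ℝ))) = |x - round x| := by
      rw [dist_eq_norm', ← hnorm x]
      congr 1
      abel
    have h2 : dist p.2 (p.2 + ((y : ℝ) : AddCircle (1 : ℝ))) = |y - round y| := by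
      rw [dist_eq_norm', ← hnorm y]
      congr 1
      abel
    rw [h1, h2]
  refine ⟨c, hcpos, fun p => ?_⟩
  apply Filter.le_liminf_of_le
  · -- coboundedness: frequently bounded above by 1/co, via Dirichlet
    apply Filter.IsCoboundedUnder.of_frequently_le (a := 1 / co)
    rw [Filter.frequently_atTop]
    intro T
    set n : ℕ := max 1 (Nat.ceil (T * co / c₀)) with hn
    have hn1 : 0 < n := Nat.lt_of_lt_of_le Nat.one_pos (le_max_left _ _)
    have hnT : T * co / c₀ ≤ (n : ℝ) := by
      calc T * co / c₀ ≤ (Nat.ceil (T * co / c₀) : ℝ) := Nat.le_ceil _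
        _ ≤ (n : ℝ) := by exact_mod_cast le_max_right _ _
    obtain ⟨k, hk0, hkn, hkap⟩ := Real.exists_nat_abs_mul_sub_round_le α hn1
    have hkR : (0:ℝ) < (k:ℝ) := by exact_mod_cast hk0
    have hklow : c₀ / (k:ℝ) ≤ 1 / ((n:ℝ) + 1) := by
      have h1 := key (round ((k:ℝ) * α)) (k : ℤ) (by exact_mod_cast hk0.ne')
      have h2 : |α * ((k:ℤ):ℝ) - (round ((k:ℝ) * α) : ℤ)| = |(k:ℝ) * α - round ((k:ℝ) * α)| :=
        by push_cast; ring_nf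
      have h3 : |(((k:ℤ)):ℝ)| = (k:ℝ) := by
        rw [abs_of_pos]; push_cast; ring; exact_mod_cast hk0
      rw [h2, h3] at h1
      exact h1.trans hkap
    have hkbig : T * co ≤ (k:ℝ) := by
      have h4 : c₀ * ((n:ℝ) + 1) ≤ (k:ℝ) := by
        rw [div_le_div_iff₀ hkR (by positivity : (0:ℝ) < (n:ℝ)+1)] at hklow
        linarith
      have h5 : T * co ≤ c₀ * (n:ℝ) := by
        rw [div_le_iff₀ hc₀] at hnT
        linarith [hnT]
      nlinarith [hc₀]
    set t : ℝ := (k:ℝ) / co with htdef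
    have htpos : 0 < t := div_pos hkR hcopos
    refine ⟨t, ?_, ?_⟩
    · rw [htdef, le_div_iff₀ hcopos]
      exact hkbig
    · rw [hdist]
      have hcos2 : t * Real.cos θ = (k:ℝ) * (Real.cos θ / co) := by
        rw [htdef]; ring
      have hsin2 : t * Real.sin θ = ((k:ℝ) * α) * (Real.cos θ / co) := by
        rw [htdef, hs]; ring
      have hsign : Real.cos θ / co = 1 ∨ Real.cos θ / co = -1 := by
        rcases hcos.lt_or_gt with hlt | hgt
        · right; rw [hco, abs_of_neg hlt]; field_simp
        · left; rw [hco, abs_of_pos hgt]; field_simp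
      -- bounds on the two components
      have hbc : |t * Real.cos θ - round (t * Real.cos θ)| = 0 := by
        rcases hsign with hσ | hσ <;> rw [hcos2, hσ]
        · have : (k:ℝ) * 1 = ((k:ℤ) : ℝ) := by push_cast; ring
          rw [this, round_intCast]
          simp
        · have h : round ((k:ℝ) * (-1)) = -(k:ℤ) := by
            rw [show (k:ℝ) * (-1) = (((-(k:ℤ)) : ℤ) : ℝ) by push_cast; ring]
            exact round_intCast _
          rw [h]
          push_cast
          ring_nf
          simp
      have hbs : |t * Real.sin θ - round (t * Real.sin θ)| ≤ 1 / ((n:ℝ) + 1) := by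
        rcases hsign with hσ | hσ <;> rw [hsin2, hσ]
        · simpa using hkap
        · have h6 := round_le (-((k:ℝ) * α)) (-(round ((k:ℝ) * α)))
          have h7 : |-((k:ℝ) * α) - ((-(round ((k:ℝ) * α)) : ℤ) : ℝ)|
              = |(k:ℝ) * α - round ((k:ℝ) * α)| := by
            push_cast
            rw [show -((k:ℝ) * α) - -((round ((k:ℝ)*α) : ℝ)) = -((k:ℝ)*α - round ((k:ℝ)*α)) by ring,
              abs_neg]
          rw [h7] at h6
          calc |(k:ℝ) * α * -1 - round ((k:ℝ) * α * -1)|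
              = |-((k:ℝ) * α) - round (-((k:ℝ) * α))| := by ring_nf
            _ ≤ |(k:ℝ) * α - round ((k:ℝ) * α)| := h6
            _ ≤ 1 / ((n:ℝ) + 1) := hkap
      have hmax : max |t * Real.sin θ - round (t * Real.sin θ)|
          |t * Real.cos θ - round (t * Real.cos θ)| ≤ 1 / ((n:ℝ) + 1) := by
        apply max_le hbs
        rw [hbc]; positivity
      calc t * max |t * Real.sin θ - round (t * Real.sin θ)|
            |t * Real.cos θ - round (t * Real.cos θ)|
          ≤ t * (1 / ((n:ℝ) + 1)) := by
            apply mul_le_mul_of_nonneg_left hmax htpos.le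
        _ = (k:ℝ) / (co * ((n:ℝ) + 1)) := by rw [htdef]; field_simp
        _ ≤ 1 / co := by
            rw [div_le_div_iff₀ (by positivity) hcopos]
            have : (k:ℝ) ≤ (n:ℝ) := by exact_mod_cast hkn
            nlinarith
  · -- the main eventual lower bound
    rw [Filter.eventually_atTop]
    refine ⟨max 1 (1 / co), fun t ht => ?_⟩
    have ht1 : (1:ℝ) ≤ t := le_trans (le_max_left _ _) ht
    have ht2 : 1 / co ≤ t := le_trans (le_max_right _ _) ht
    have htco : 1 ≤ t * co := by
      rw [div_le_iff₀ hcopos] at ht2; linarith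
    have htpos : 0 < t := by linarith
    rw [hdist]
    set pe : ℤ := round (t * Real.sin θ)
    set qe : ℤ := round (t * Real.cos θ)
    set δ : ℝ := t * Real.sin θ - pe with hδ
    set ε : ℝ := t * Real.cos θ - qe with hε
    have hδle : |δ| ≤ 1/2 := abs_sub_round _
    have hεle : |ε| ≤ 1/2 := abs_sub_round _
    have hqabs : |(qe : ℝ)| ≥ t * co - 1/2 := by
      have h8 : |t * Real.cos θ| - |ε| ≤ |(qe : ℝ)| := by
        have := abs_sub_abs_le_abs_sub (t * Real.cos θ) (qe : ℝ)
        rw [← hε] at this; linarith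
      rw [abs_mul, abs_of_pos htpos, ← hco] at h8
      linarith
    have hqne : qe ≠ 0 := by
      intro h
      rw [h] at hqabs
      simp at hqabs
      linarith
    have hqub : |(qe : ℝ)| ≤ t * (1 + co) := by
      have h9 : |(qe : ℝ)| ≤ |t * Real.cos θ| + |ε| := by
        have := abs_sub_abs_le_abs_sub (qe : ℝ) (t * Real.cos θ)
        rw [abs_sub_comm, ← hε] at this; linarith
      rw [abs_mul, abs_of_pos htpos, ← hco] at h9
      nlinarith
    have hid : α * qe - pe = δ - α * ε := by
      have h1 : (pe : ℝ) = t * Real.sin θ - δ := by rw [hδ]; ring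
      have h2 : (qe : ℝ) = t * Real.cos θ - ε := by rw [hε]; ring
      rw [h1, h2, hs]; ring
    have hkey := key pe qe hqne
    rw [hid] at hkey
    set D := max |δ| |ε| with hD
    have hDnn : 0 ≤ D := le_trans (abs_nonneg δ) (le_max_left _ _)
    have hbound : |δ - α * ε| ≤ (1 + |α|) * D := by
      calc |δ - α * ε| ≤ |δ| + |α| * |ε| := by
            rw [← abs_mul]; exact abs_sub _ _
        _ ≤ D + |α| * D := by
            have h1 : |δ| ≤ D := le_max_left _ _
            have h2 : |ε| ≤ D := le_max_right _ _
            have := mul_le_mul_of_nonneg_left h2 (abs_nonneg α)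
            linarith
        _ = (1 + |α|) * D := by ring
    have hqpos : 0 < |(qe : ℝ)| := by
      rw [abs_pos]
      exact_mod_cast hqne
    have step : c₀ / |(qe : ℝ)| ≤ (1 + |α|) * D := le_trans hkey hbound
    have step2 : c₀ ≤ (1 + |α|) * D * |(qe : ℝ)| := by
      rw [div_le_iff₀ hqpos] at step; exact step
    have step3 : c₀ ≤ (1 + |α|) * D * (t * (1 + co)) := by
      calc c₀ ≤ (1 + |α|) * D * |(qe : ℝ)| := step2
        _ ≤ (1 + |α|) * D * (t * (1 + co)) := by
            apply mul_le_mul_of_nonneg_left hqub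
            positivity
    rw [hc, div_le_iff₀ (by positivity : (0:ℝ) < (1 + |α|) * (1 + co))]
    calc c₀ ≤ (1 + |α|) * D * (t * (1 + co)) := step3
      _ = t * D * ((1 + |α|) * (1 + co)) := by ring
end
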